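/- Let $F : \mathcal{P}(D) \to \mathbb{R}$ be a monotone submodular set function on subsets of a finite set $D$ with $F(\emptyset) = 0$. Let $A_0 = \emptyset$ and for $i = 1, \dots, K$ let $A_i = A_{i-1} \cup \{a_i\}$ where $a_i \in D$ maximizes the marginal gain $F(A_{i-1} \cup \{a\}) - F(A_{i-1})$ over $a \in D$. Then for any set $S \subseteq D$ with $|S| \le K$, $F(A_K) \ge (1 - (1 - 1/K)^K) \cdot F(S) \ge (1 - 1/e) F(S)$. -/
import Mathlib


/-- The greedy algorithm for a monotone submodular set function `F` with `F ∅ = 0`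
achieves a `(1 - (1 - 1/K)^K) ≥ (1 - 1/e)` approximation after `K` steps. -/
theorem greedy_submodular_approximation {X : Type*} [DecidableEq X]
    (D : Finset X) (F : Finset X → ℝ)
    (hmono : ∀ A B : Finset X, A ⊆ B → B ⊆ D → F A ≤ F B)
    (hsub : ∀ A B : Finset X, ∀ x ∈ D, A ⊆ B → B ⊆ D →
      F (insert x A) - F A ≥ F (insert x B) - F B)
    (hempty : F ∅ = 0)
    (K : ℕ) (hK : 1 ≤ K)
    (A : ℕ → Finset X) (hA0 : A 0 = ∅)
    (hgreedy : ∀ i : ℕ, 1 ≤ i → i ≤ K → ∃ a ∈ D,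
      A i = insert a (A (i - 1)) ∧
      ∀ b ∈ D, F (insert b (A (i - 1))) - F (A (i - 1))
        ≤ F (insert a (A (i - 1))) - F (A (i - 1)))
    (hAD : ∀ i : ℕ, i ≤ K → A i ⊆ D)
    (S : Finset X) (hSD : S ⊆ D) (hScard : S.card ≤ K) :
    F (A K) ≥ (1 - (1 - 1 / (K : ℝ)) ^ K) * F S ∧
      (1 - (1 - 1 / (K : ℝ)) ^ K) * F S ≥ (1 - 1 / Real.exp 1) * F S := by
  have hk1 : (1:ℝ) ≤ K := by exact_mod_cast hK
  have hK0 : (0:ℝ) < K := by linarith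
  have h1K : (0:ℝ) ≤ 1 - 1 / K := by
    have : (1:ℝ) / K ≤ 1 := by rw [div_le_one hK0]; exact hk1
    linarith
  have hFS0 : 0 ≤ F S := by
    have := hmono ∅ S (Finset.empty_subset S) hSD
    linarith
  -- key submodularity lemma
  have key : ∀ (B T : Finset X), B ⊆ D → T ⊆ D →
      F (B ∪ T) - F B ≤ ∑ x ∈ T, (F (insert x B) - F B) := by
    intro B T hB
    induction T using Finset.induction_on with
    | empty => intro _; simp
    | @insert y T hyT ih =>
      intro hT
      have hTD : T ⊆ D := fun x hx => hT (Finset.mem_insert_of_mem hx)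
      have hyD : y ∈ D := hT (Finset.mem_insert_self y T)
      have h1 := hsub B (B ∪ T) y hyD Finset.subset_union_left
        (Finset.union_subset hB hTD)
      rw [Finset.sum_insert hyT]
      have h2 := ih hTD
      have : B ∪ insert y T = insert y (B ∪ T) := Finset.union_insert y B T
      rw [this]
      linarith
  -- gap induction
  have gap : ∀ i, i ≤ K → F S - F (A i) ≤ (1 - 1 / (K:ℝ)) ^ i * F S := by
    intro i
    induction i with
    | zero => intro _; simp [hA0, hempty]
    | succ i ih =>
      intro hiK
      have hiK' : i ≤ K := Nat.le_of_succ_le hiK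
      obtain ⟨a, haD, hAi, hmax⟩ := hgreedy (i + 1) (Nat.le_add_left 1 i) hiK
      simp only [Nat.add_sub_cancel] at hAi hmax
      have hADi := hAD i hiK'
      set g := F (insert a (A i)) - F (A i) with hg
      have hg0 : 0 ≤ g := by
        have := hmono (A i) (insert a (A i)) (Finset.subset_insert a _)
          (Finset.insert_subset haD hADi)
        simp only [hg]; linarith
      have hKg : F S - F (A i) ≤ K * g := by
        have h1 : F S ≤ F (A i ∪ S) := hmono S (A i ∪ S) Finset.subset_union_right
          (Finset.union_subset hADi hSD)
        have h2 := key (A i) S hADi hSD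
        have h3 : ∑ x ∈ S, (F (insert x (A i)) - F (A i)) ≤ S.card * g := by
          calc ∑ x ∈ S, (F (insert x (A i)) - F (A i)) ≤ ∑ _x ∈ S, g :=
                Finset.sum_le_sum (fun x hx => hmax x (hSD hx))
            _ = S.card * g := by simp [nsmul_eq_mul]
        have h4 : (S.card : ℝ) * g ≤ K * g := by
          apply mul_le_mul_of_nonneg_right _ hg0
          exact_mod_cast hScard
        linarith
      have h5 : F S - F (A (i + 1)) ≤ (1 - 1 / (K:ℝ)) * (F S - F (A i)) := by
        rw [hAi]
        have heq : (1 - 1 / (K:ℝ)) * (F S - F (A i))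
            = (F S - F (A i)) - (F S - F (A i)) * (1 / K) := by ring
        rw [heq]
        have hdiv : (F S - F (A i)) * (1 / K) ≤ g := by
          rw [mul_one_div, div_le_iff₀ hK0]
          linarith
        simp only [hg] at hdiv ⊢
        linarith
      calc F S - F (A (i + 1)) ≤ (1 - 1 / (K:ℝ)) * (F S - F (A i)) := h5
        _ ≤ (1 - 1 / (K:ℝ)) * ((1 - 1 / (K:ℝ)) ^ i * F S) :=
            mul_le_mul_of_nonneg_left (ih hiK') h1K
        _ = (1 - 1 / (K:ℝ)) ^ (i + 1) * F S := by ring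
  have hgapK := gap K le_rfl
  constructor
  · nlinarith [hgapK]
  · have hexp : (1 - 1 / (K:ℝ)) ^ K ≤ 1 / Real.exp 1 := by
      have h1 : (1:ℝ) - 1 / K ≤ Real.exp (-(1 / K)) := by
        have := Real.add_one_le_exp (-(1 / (K:ℝ)))
        linarith
      have h2 : (1 - 1 / (K:ℝ)) ^ K ≤ Real.exp (-(1 / K)) ^ K :=
        pow_le_pow_left₀ h1K h1 K
      have h3 : Real.exp (-(1 / (K:ℝ))) ^ K = Real.exp ((K:ℝ) * (-(1 / K))) :=
        (Real.exp_nat_mul _ K).symm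
      have h4 : (K:ℝ) * (-(1 / K)) = -1 := by field_simp
      rw [h3, h4, Real.exp_neg] at h2
      simpa [one_div] using h2
    have : (1 - 1 / Real.exp 1) ≤ (1 - (1 - 1 / (K:ℝ)) ^ K) := by linarith
    exact mul_le_mul_of_nonneg_right this hFS0
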